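/- arXiv:1307.7454 — 6 statements merged into one kernel-verified Lean document; each statement's English description precedes it below -/
import Mathlib

section
/- Run the Misra–Gries algorithm with ℓ counters on a stream of n items. For any integer k with 0 ≤ k < ℓ, the number r of stream steps at which the decrement operation occurs satisfies r ≤ R_k/(ℓ − k). -/
/-- One step of the Misra–Gries algorithm with `ℓ` counters.  The state is the
function giving the current counter value of each item (an item is a stored
label iff its counter is positive).  If the arriving item `a` matches a stored
label, its counter is incremented; otherwise, if fewer than `ℓ` counters are
in use, `a` is stored with counter `1`; otherwise all counters are decremented
by `1`.  Returns the new state together with whether a decrement occurred. -/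
def mgStep (u ℓ : ℕ) (s : Fin u → ℕ) (a : Fin u) : (Fin u → ℕ) × Bool :=
  if 0 < s a then (Function.update s a (s a + 1), false)
  else if (Finset.univ.filter fun j => 0 < s j).card < ℓ then
    (Function.update s a 1, false)
  else ((fun j => s j - 1), true)

/-- Run the Misra–Gries algorithm with `ℓ` counters on a stream, starting from
all counters empty.  Returns the final counter values `f̂` together with the
number `r` of stream steps at which the decrement operation occurred. -/
def mgRun (u ℓ : ℕ) (stream : List (Fin u)) : (Fin u → ℕ) × ℕ :=
  stream.foldl
    (fun p a => ((mgStep u ℓ p.1 a).1, p.2 + if (mgStep u ℓ p.1 a).2 then 1 else 0))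
    ((fun _ => 0), 0)

def mgF (u k : ℕ) : Finset (Fin u) := Finset.univ.filter (fun j => k ≤ (j : ℕ))

def mgPhi (u k : ℕ) (s : Fin u → ℕ) : ℕ := ∑ j ∈ mgF u k, s j

lemma mg_card_lt (u k : ℕ) : (Finset.univ.filter (fun j : Fin u => (j : ℕ) < k)).card ≤ k := by
  have := Finset.card_le_card_of_injOn (f := fun j : Fin u => (j : ℕ))
    (s := Finset.univ.filter (fun j : Fin u => (j : ℕ) < k)) (t := Finset.range k)
    (by intro j hj; simp at hj ⊢; exact hj) (by intro a _ b _ h; exact Fin.val_injective h)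
  simpa using this

lemma mg_phi_update (u k : ℕ) (s : Fin u → ℕ) (a : Fin u) (v : ℕ) (hv : v ≤ s a + 1) :
    mgPhi u k (Function.update s a v) ≤ mgPhi u k s + (if k ≤ (a:ℕ) then 1 else 0) := by
  unfold mgPhi
  calc ∑ j ∈ mgF u k, Function.update s a v j
      ≤ ∑ j ∈ mgF u k, (s j + if j = a then 1 else 0) := by
        apply Finset.sum_le_sum
        intro j hj
        by_cases hja : j = a
        · subst hja; simpa using hv
        · simp [Function.update_of_ne hja, hja]
    _ = (∑ j ∈ mgF u k, s j) + ∑ j ∈ mgF u k, (if j = a then 1 else 0) := Finset.sum_add_distrib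
    _ ≤ (∑ j ∈ mgF u k, s j) + (if k ≤ (a:ℕ) then 1 else 0) := by
        gcongr
        rw [Finset.sum_ite_eq' (mgF u k) a (fun _ => 1)]
        simp [mgF]

lemma mg_step_key (u ℓ k : ℕ) (hk : k < ℓ) (s : Fin u → ℕ) (a : Fin u) (r : ℕ) :
    (r + if (mgStep u ℓ s a).2 then 1 else 0) * (ℓ - k) + mgPhi u k (mgStep u ℓ s a).1
      ≤ r * (ℓ - k) + mgPhi u k s + (if k ≤ (a : ℕ) then 1 else 0) := by
  by_cases h1 : 0 < s a
  · have e1 : (mgStep u ℓ s a).1 = Function.update s a (s a + 1) := by simp [mgStep, h1]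
    have e2 : (mgStep u ℓ s a).2 = false := by simp [mgStep, h1]
    rw [e1, e2]
    have hb := mg_phi_update u k s a (s a + 1) le_rfl
    simp only [Bool.false_eq_true, if_false, add_zero]
    omega
  · by_cases h2 : (Finset.univ.filter fun j => 0 < s j).card < ℓ
    · have e1 : (mgStep u ℓ s a).1 = Function.update s a 1 := by simp [mgStep, h1, h2]
      have e2 : (mgStep u ℓ s a).2 = false := by simp [mgStep, h1, h2]
      rw [e1, e2]
      have hb := mg_phi_update u k s a 1 (by omega)
      simp only [Bool.false_eq_true, if_false, add_zero]
      omega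
    · have e1 : (mgStep u ℓ s a).1 = fun j => s j - 1 := by simp [mgStep, h1, h2]
      have e2 : (mgStep u ℓ s a).2 = true := by simp [mgStep, h1, h2]
      rw [e1, e2]
      simp only [if_true]
      have hcard : ℓ ≤ (Finset.univ.filter fun j => 0 < s j).card := le_of_not_gt h2
      have hsplit : (Finset.univ.filter fun j : Fin u => 0 < s j).card
          ≤ ((mgF u k).filter (fun j => 0 < s j)).card + k := by
        have hsub : (Finset.univ.filter fun j : Fin u => 0 < s j)
            ⊆ ((mgF u k).filter (fun j => 0 < s j)) ∪ (Finset.univ.filter (fun j : Fin u => (j:ℕ) < k)) := by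
          intro j hj
          simp only [Finset.mem_filter, Finset.mem_univ, true_and] at hj
          by_cases hjk : k ≤ (j : ℕ)
          · exact Finset.mem_union_left _ (by simp [mgF, hjk, hj])
          · exact Finset.mem_union_right _ (by simp; omega)
        calc (Finset.univ.filter fun j : Fin u => 0 < s j).card
            ≤ _ := Finset.card_le_card hsub
          _ ≤ ((mgF u k).filter (fun j => 0 < s j)).card + (Finset.univ.filter (fun j : Fin u => (j:ℕ) < k)).card :=
              Finset.card_union_le _ _
          _ ≤ _ := by have := mg_card_lt u k; omega
      have hphi : mgPhi u k (fun j => s j - 1) + ((mgF u k).filter (fun j => 0 < s j)).card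
          = mgPhi u k s := by
        unfold mgPhi
        rw [Finset.card_filter, ← Finset.sum_add_distrib]
        apply Finset.sum_congr rfl
        intro j _
        by_cases hj : 0 < s j <;> simp [hj] <;> omega
      have hr : (r + 1) * (ℓ - k) = r * (ℓ - k) + (ℓ - k) := by ring
      omega

lemma mg_run_key (u ℓ k : ℕ) (hk : k < ℓ) :
    ∀ (stream : List (Fin u)) (s : Fin u → ℕ) (r : ℕ),
    (stream.foldl (fun p a => ((mgStep u ℓ p.1 a).1, p.2 + if (mgStep u ℓ p.1 a).2 then 1 else 0)) (s, r)).2 * (ℓ - k)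
      + mgPhi u k (stream.foldl (fun p a => ((mgStep u ℓ p.1 a).1, p.2 + if (mgStep u ℓ p.1 a).2 then 1 else 0)) (s, r)).1
      ≤ r * (ℓ - k) + mgPhi u k s + ∑ j ∈ mgF u k, stream.count j := by
  intro stream
  induction stream with
  | nil => intro s r; simp
  | cons a t ih =>
    intro s r
    simp only [List.foldl_cons]
    have h1 := ih (mgStep u ℓ s a).1 (r + if (mgStep u ℓ s a).2 then 1 else 0)
    have h2 := mg_step_key u ℓ k hk s a r
    have h3 : ∑ j ∈ mgF u k, (a :: t).count j
        = (∑ j ∈ mgF u k, t.count j) + (if k ≤ (a:ℕ) then 1 else 0) := by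
      simp only [List.count_cons]
      rw [Finset.sum_add_distrib]
      congr 1
      simp only [beq_iff_eq]
      rw [Finset.sum_ite_eq (mgF u k) a (fun _ => 1)]
      simp [mgF]
    omega

/-- Run the Misra–Gries algorithm with `ℓ` counters on a stream of `n` items
(from universe `[u]`, indexed so that true frequencies are non-increasing).
For any integer `k` with `0 ≤ k < ℓ`, the number `r` of stream steps at which
the decrement operation occurs satisfies `r ≤ R_k / (ℓ - k)`, where
`R_k = ∑_{j = k+1}^{u} f_j` is the total frequency outside the top `k` items. -/
theorem misraGries_decrement_le (u ℓ k : ℕ) (hk : k < ℓ)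
    (stream : List (Fin u))
    (hsorted : ∀ i j : Fin u, i ≤ j → stream.count j ≤ stream.count i) :
    ((mgRun u ℓ stream).2 : ℝ) ≤
      (∑ j ∈ Finset.univ.filter (fun j : Fin u => k ≤ (j : ℕ)),
          (stream.count j : ℝ)) / ((ℓ : ℝ) - (k : ℝ)) := by
  have key := mg_run_key u ℓ k hk stream (fun _ => 0) 0
  have hnat : (mgRun u ℓ stream).2 * (ℓ - k) ≤ ∑ j ∈ mgF u k, stream.count j := by
    unfold mgRun
    simp only [mgPhi, Finset.sum_const_zero, zero_mul, zero_add] at key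
    omega
  have hpos : (0 : ℝ) < (ℓ : ℝ) - (k : ℝ) := by
    have : (k : ℝ) < ℓ := by exact_mod_cast hk
    linarith
  rw [le_div_iff₀ hpos]
  calc ((mgRun u ℓ stream).2 : ℝ) * ((ℓ:ℝ) - k)
      = (((mgRun u ℓ stream).2 * (ℓ - k) : ℕ) : ℝ) := by
        push_cast [Nat.cast_sub hk.le]; ring
    _ ≤ ((∑ j ∈ mgF u k, stream.count j : ℕ) : ℝ) := by exact_mod_cast hnat
    _ = _ := by push_cast [mgF]; rfl
end

section
/- Run the Misra–Gries algorithm with ℓ counters on a stream of n items. Then r(ℓ+1) ≤ n (in particular r < n/ℓ whenever n ≥ 1), and for every item j one has 0 ≤ f_j − f̂_j ≤ r. -/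
/-!
At most `ℓ` labels are ever stored, so a decrement happens only when all `ℓ` counters are
full, and it discards `ℓ + 1` occurrences at once: the arriving item and one occurrence
from each counter. Every other step stores its item, hence `∑ f̂ + r (ℓ + 1) = n`.
Every occurrence of `j` is either still counted in `f̂_j` or was discarded by a decrement,
and a decrement discards at most one occurrence of `j`; so `f̂_j ≤ f_j ≤ f̂_j + r`.
-/

open Finset

namespace MisraGries

lemma sum_update_add_apply {ι M : Type*} [Fintype ι] [DecidableEq ι] [AddCommMonoid M]
    (f : ι → M) (i : ι) (b : M) : ∑ j, Function.update f i b j + f i = ∑ j, f j + b := by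
  rw [sum_update_of_mem (mem_univ i), ← add_sum_erase _ f (mem_univ i), erase_eq]
  abel

variable {u ℓ : ℕ}

abbrev stored (s : Fin u → ℕ) : Finset (Fin u) := univ.filter fun j => 0 < s j

lemma stored_update_succ {s : Fin u → ℕ} {a : Fin u} (ha : 0 < s a) :
    stored (Function.update s a (s a + 1)) = stored s := by
  ext j
  rcases eq_or_ne j a with rfl | hj <;> simp [stored, Function.update_of_ne, *]

lemma stored_update_subset (s : Fin u → ℕ) (a : Fin u) (b : ℕ) :
    stored (Function.update s a b) ⊆ insert a (stored s) := by
  intro j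
  rcases eq_or_ne j a with rfl | hj <;> simp [stored, Function.update_of_ne, *]

lemma stored_pred_subset (s : Fin u → ℕ) : stored (fun j => s j - 1) ⊆ stored s :=
  monotone_filter_right _ fun j _ (h : 0 < s j - 1) => by omega

lemma sum_pred_add_card_stored (s : Fin u → ℕ) : ∑ j, (s j - 1) + #(stored s) = ∑ j, s j := by
  rw [stored, card_filter, ← sum_add_distrib]
  exact sum_congr rfl fun j _ => by split <;> omega

lemma count_append_singleton (L : List (Fin u)) (a j : Fin u) :
    (L ++ [a]).count j = L.count j + if a = j then 1 else 0 := by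
  simp [List.count_append, List.count_singleton']

lemma mgRun_append_singleton (L : List (Fin u)) (a : Fin u) :
    mgRun u ℓ (L ++ [a]) =
      ((mgStep u ℓ (mgRun u ℓ L).1 a).1,
        (mgRun u ℓ L).2 + if (mgStep u ℓ (mgRun u ℓ L).1 a).2 then 1 else 0) := by
  rw [mgRun, List.foldl_append]
  rfl

/-- `L` is the prefix read so far, `s` the counters and `r` the number of decrements. -/
structure Invariant (ℓ : ℕ) (L : List (Fin u)) (s : Fin u → ℕ) (r : ℕ) : Prop where
  card_stored_le : #(stored s) ≤ ℓ
  sum_add_mul_eq : ∑ j, s j + r * (ℓ + 1) = L.length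
  le_count : ∀ j, s j ≤ L.count j
  count_le : ∀ j, L.count j ≤ s j + r

namespace Invariant

variable {L : List (Fin u)} {s : Fin u → ℕ} {r : ℕ}

lemma update_succ (h : Invariant ℓ L s r) (a : Fin u)
    (hcard : #(stored (Function.update s a (s a + 1))) ≤ ℓ) :
    Invariant ℓ (L ++ [a]) (Function.update s a (s a + 1)) r := by
  have happly (j : Fin u) : Function.update s a (s a + 1) j = s j + if a = j then 1 else 0 := by
    rcases eq_or_ne j a with rfl | hj <;> simp [Function.update_of_ne, Ne.symm, *]
  refine ⟨hcard, ?_, fun j => ?_, fun j => ?_⟩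
  · have := sum_update_add_apply s a (s a + 1)
    have := h.sum_add_mul_eq
    rw [List.length_append, List.length_singleton]
    omega
  · rw [happly, count_append_singleton]
    exact Nat.add_le_add_right (h.le_count j) _
  · rw [happly, count_append_singleton]
    have := h.count_le j
    omega

lemma pred (h : Invariant ℓ L s r) {a : Fin u} (ha : s a = 0) (hfull : #(stored s) = ℓ) :
    Invariant ℓ (L ++ [a]) (fun j => s j - 1) (r + 1) := by
  refine ⟨(card_le_card (stored_pred_subset s)).trans h.card_stored_le, ?_, fun j => ?_,
    fun j => ?_⟩
  · have := sum_pred_add_card_stored s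
    have := h.sum_add_mul_eq
    rw [List.length_append, List.length_singleton]
    linarith
  · have := h.le_count j
    rw [count_append_singleton]
    omega
  · have := h.count_le j
    rw [count_append_singleton]
    split_ifs with haj
    · subst haj; omega
    · omega

lemma mgStep (h : Invariant ℓ L s r) (a : Fin u) :
    Invariant ℓ (L ++ [a]) (mgStep u ℓ s a).1 (r + if (mgStep u ℓ s a).2 then 1 else 0) := by
  by_cases hpos : 0 < s a
  · rw [_root_.mgStep, if_pos hpos]
    exact h.update_succ a (by rw [stored_update_succ hpos]; exact h.card_stored_le)
  obtain ha : s a = 0 := by omega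
  by_cases hlt : #(stored s) < ℓ
  · rw [_root_.mgStep, if_neg hpos, if_pos hlt]
    have hcard := (card_le_card (stored_update_subset s a (s a + 1))).trans
      ((card_insert_le _ _).trans hlt)
    simpa [ha] using h.update_succ a hcard
  · rw [_root_.mgStep, if_neg hpos, if_neg hlt]
    exact h.pred ha (le_antisymm h.card_stored_le (not_lt.mp hlt))

end Invariant

lemma invariant_mgRun (L : List (Fin u)) : Invariant ℓ L (mgRun u ℓ L).1 (mgRun u ℓ L).2 := by
  induction L using List.reverseRecOn with
  | nil => exact ⟨by simp [stored, mgRun], by simp [mgRun], fun _ => le_rfl, fun _ => by simp⟩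
  | append_singleton L a ih =>
    rw [mgRun_append_singleton]
    exact ih.mgStep a

end MisraGries

open MisraGries in
/-- Run the Misra–Gries algorithm with `ℓ` counters on a stream of `n` items.
Then `r * (ℓ + 1) ≤ n` (in particular `r < n / ℓ` whenever `n ≥ 1`), and for
every item `j` one has `0 ≤ f_j - f̂_j ≤ r`, where `f_j` is the true frequency
of `j`, `f̂_j` is its final counter value, and `r` is the number of stream
steps at which the decrement operation occurs. -/
theorem misraGries_basic_bounds (u ℓ : ℕ) (hℓ : 1 ≤ ℓ) (stream : List (Fin u)) :
    (mgRun u ℓ stream).2 * (ℓ + 1) ≤ stream.length ∧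
    (1 ≤ stream.length →
      ((mgRun u ℓ stream).2 : ℝ) < (stream.length : ℝ) / (ℓ : ℝ)) ∧
    ∀ j : Fin u,
      0 ≤ (stream.count j : ℝ) - ((mgRun u ℓ stream).1 j : ℝ) ∧
      (stream.count j : ℝ) - ((mgRun u ℓ stream).1 j : ℝ) ≤
        ((mgRun u ℓ stream).2 : ℝ) := by
  have hinv := invariant_mgRun (ℓ := ℓ) stream
  set r := (mgRun u ℓ stream).2
  have hr : r * (ℓ + 1) ≤ stream.length := hinv.sum_add_mul_eq ▸ Nat.le_add_left _ _
  refine ⟨hr, fun hn => ?_, fun j => ⟨?_, ?_⟩⟩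
  · have hlt : r * ℓ < stream.length := by
      rcases Nat.eq_zero_or_pos r with h0 | h0
      · rwa [h0, zero_mul]
      · linarith
    rw [lt_div_iff₀ (by exact_mod_cast hℓ)]
    exact_mod_cast hlt
  · exact sub_nonneg.mpr (by exact_mod_cast hinv.le_count j)
  · exact sub_le_iff_le_add'.mpr (by exact_mod_cast hinv.count_le j)
end

section
/- For the Frequent Directions shrinking step producing Q from C, for every unit vector x ∈ ℝ^d one has ‖Cx‖² − ‖Qx‖² ≤ δ. -/
open Matrix

/-- The squared Euclidean norm of a vector in `ℝ^m`. -/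
noncomputable def sqNorm {m : ℕ} (v : Fin m → ℝ) : ℝ := ∑ i, v i ^ 2

/-- The squared Frobenius norm of a real matrix. -/
noncomputable def frobSq {m p : ℕ} (M : Matrix (Fin m) (Fin p) ℝ) : ℝ :=
  ∑ i, ∑ j, M i j ^ 2

lemma sqNorm_eq_dot {m : ℕ} (v : Fin m → ℝ) : sqNorm v = v ⬝ᵥ v := by
  simp [sqNorm, dotProduct, sq]

lemma sqNorm_mulVec {m p : ℕ} (M : Matrix (Fin m) (Fin p) ℝ) (v : Fin p → ℝ) :
    sqNorm (M.mulVec v) = v ⬝ᵥ ((Mᵀ * M).mulVec v) := by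
  rw [sqNorm_eq_dot, Matrix.dotProduct_mulVec, ← Matrix.mulVec_mulVec,
    ← Matrix.mulVec_transpose, dotProduct_comm]

/-- For the Frequent Directions shrinking step producing `Q` from `C`, for
every unit vector `x ∈ ℝ^d` one has `‖Cx‖² - ‖Qx‖² ≤ δ`. -/
theorem fd_shrink_directional_loss
    (ℓ d : ℕ) (hℓ : 0 < ℓ)
    (C : Matrix (Fin ℓ) (Fin d) ℝ)
    (Z : Matrix (Fin ℓ) (Fin ℓ) ℝ) (Y : Matrix (Fin d) (Fin ℓ) ℝ)
    (s : Fin ℓ → ℝ) (δ : ℝ) (Q : Matrix (Fin ℓ) (Fin d) ℝ)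
    -- a singular value decomposition `C = Z S Yᵀ`
    (hZ : Zᵀ * Z = 1) (hY : Yᵀ * Y = 1)
    (hSVD : C = Z * Matrix.diagonal s * Yᵀ)
    (hmono : ∀ j j' : Fin ℓ, j ≤ j' → s j' ≤ s j)
    (hnn : ∀ j, 0 ≤ s j)
    -- `δ = s_ℓ²`, the square of the smallest singular value
    (hδ : δ = s ⟨ℓ - 1, Nat.sub_lt hℓ Nat.one_pos⟩ ^ 2)
    -- the shrinking step `Q = S' Yᵀ` with `S' = diag (√(s_j² - δ))`
    (hQ : Q = Matrix.diagonal (fun j => Real.sqrt (s j ^ 2 - δ)) * Yᵀ)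
    (x : Fin d → ℝ) (hx : sqNorm x = 1) :
    sqNorm (C.mulVec x) - sqNorm (Q.mulVec x) ≤ δ := by
  set u : Fin ℓ → ℝ := Yᵀ.mulVec x with hu
  have hδ0 : 0 ≤ δ := hδ ▸ sq_nonneg _
  have hsub : ∀ j, 0 ≤ s j ^ 2 - δ := by
    intro j
    have := hmono j ⟨ℓ - 1, Nat.sub_lt hℓ Nat.one_pos⟩ (Fin.le_def.2 (Nat.le_sub_one_of_lt j.2))
    have : δ ≤ s j ^ 2 := hδ ▸ pow_le_pow_left₀ (hnn _) this 2
    linarith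
  -- ‖Cx‖²
  have hCx : C.mulVec x = Z.mulVec ((Matrix.diagonal s).mulVec u) := by
    rw [hSVD, Matrix.mul_assoc, ← Matrix.mulVec_mulVec, ← Matrix.mulVec_mulVec, hu]
  have h1 : sqNorm (C.mulVec x) = ∑ j, s j ^ 2 * u j ^ 2 := by
    rw [hCx, sqNorm_mulVec, hZ, Matrix.one_mulVec, ← sqNorm_eq_dot]
    simp [sqNorm, Matrix.mulVec_diagonal, mul_pow]
  -- ‖Qx‖²
  have hQx : Q.mulVec x = fun j => Real.sqrt (s j ^ 2 - δ) * u j := by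
    rw [hQ]; ext j; rw [← Matrix.mulVec_mulVec, Matrix.mulVec_diagonal, hu]
  have h2 : sqNorm (Q.mulVec x) = ∑ j, (s j ^ 2 - δ) * u j ^ 2 := by
    rw [hQx]; simp only [sqNorm, mul_pow]
    refine Finset.sum_congr rfl fun j _ => ?_
    rw [Real.sq_sqrt (hsub j)]
  -- sqNorm u ≤ 1
  have ht0 : sqNorm u = u ⬝ᵥ u := sqNorm_eq_dot u
  have hxu : x ⬝ᵥ (Y.mulVec u) = u ⬝ᵥ u := by
    rw [Matrix.dotProduct_mulVec, ← Matrix.mulVec_transpose, ← hu]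
  have hpp : (Y.mulVec u) ⬝ᵥ (Y.mulVec u) = u ⬝ᵥ u := by
    rw [← sqNorm_eq_dot, sqNorm_mulVec, hY, Matrix.one_mulVec]
  have hle : sqNorm u ≤ 1 := by
    have h0 : 0 ≤ sqNorm (fun i => x i - Y.mulVec u i) :=
      Finset.sum_nonneg fun i _ => sq_nonneg _
    have hexp : sqNorm (fun i => x i - Y.mulVec u i)
        = sqNorm x - 2 * (x ⬝ᵥ Y.mulVec u) + (Y.mulVec u ⬝ᵥ Y.mulVec u) := by
      simp only [sqNorm, dotProduct, Finset.mul_sum, ← Finset.sum_add_distrib,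
        ← Finset.sum_sub_distrib]
      refine Finset.sum_congr rfl fun i _ => ?_; ring
    rw [hexp, hx, hxu, ← ht0] at h0
    linarith
  have hsum : sqNorm (C.mulVec x) - sqNorm (Q.mulVec x) = δ * sqNorm u := by
    rw [h1, h2, sqNorm, ← Finset.sum_sub_distrib, Finset.mul_sum]
    refine Finset.sum_congr rfl fun j _ => ?_; ring
  rw [hsum]
  calc δ * sqNorm u ≤ δ * 1 := by nlinarith
    _ = δ := mul_one δ
end

section
/- For the Frequent Directions shrinking step producing Q from C, for every vector x ∈ ℝ^d one has ‖Qx‖² ≤ ‖Cx‖². -/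
open Matrix

/-- For the Frequent Directions shrinking step producing `Q` from `C`, for
every vector `x ∈ ℝ^d` one has `‖Qx‖² ≤ ‖Cx‖²`. -/
theorem fd_shrink_monotone
    (ℓ d : ℕ) (hℓ : 0 < ℓ)
    (C : Matrix (Fin ℓ) (Fin d) ℝ)
    (Z : Matrix (Fin ℓ) (Fin ℓ) ℝ) (Y : Matrix (Fin d) (Fin ℓ) ℝ)
    (s : Fin ℓ → ℝ) (δ : ℝ) (Q : Matrix (Fin ℓ) (Fin d) ℝ)
    -- a singular value decomposition `C = Z S Yᵀ`
    (hZ : Zᵀ * Z = 1) (hY : Yᵀ * Y = 1)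
    (hSVD : C = Z * Matrix.diagonal s * Yᵀ)
    (hmono : ∀ j j' : Fin ℓ, j ≤ j' → s j' ≤ s j)
    (hnn : ∀ j, 0 ≤ s j)
    -- `δ = s_ℓ²`, the square of the smallest singular value
    (hδ : δ = s ⟨ℓ - 1, Nat.sub_lt hℓ Nat.one_pos⟩ ^ 2)
    -- the shrinking step `Q = S' Yᵀ` with `S' = diag (√(s_j² - δ))`
    (hQ : Q = Matrix.diagonal (fun j => Real.sqrt (s j ^ 2 - δ)) * Yᵀ)
    (x : Fin d → ℝ) :
    sqNorm (Q.mulVec x) ≤ sqNorm (C.mulVec x) := by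

  have key : ∀ v : Fin ℓ → ℝ, sqNorm (Z.mulVec v) = sqNorm v := by
    intro v
    have h1 : sqNorm (Z.mulVec v) = (Z.mulVec v) ⬝ᵥ (Z.mulVec v) := by
      simp [sqNorm, dotProduct, sq]
    have h2 : sqNorm v = v ⬝ᵥ v := by simp [sqNorm, dotProduct, sq]
    rw [h1, h2, Matrix.dotProduct_mulVec]
    have : Z.mulVec v = Matrix.vecMul v Zᵀ := (Matrix.vecMul_transpose Z v).symm
    rw [this, Matrix.vecMul_vecMul, hZ, Matrix.vecMul_one]
  set y : Fin ℓ → ℝ := Yᵀ.mulVec x with hy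
  have hC : C.mulVec x = Z.mulVec ((Matrix.diagonal s).mulVec y) := by
    rw [hSVD, ← Matrix.mulVec_mulVec, ← Matrix.mulVec_mulVec]
  have hQx : Q.mulVec x = (Matrix.diagonal (fun j => Real.sqrt (s j ^ 2 - δ))).mulVec y := by
    rw [hQ, ← Matrix.mulVec_mulVec]
  rw [hC, hQx, key]
  simp only [sqNorm, Matrix.mulVec_diagonal]
  apply Finset.sum_le_sum
  intro j _
  have hle : s ⟨ℓ - 1, Nat.sub_lt hℓ Nat.one_pos⟩ ≤ s j :=
    hmono j ⟨ℓ - 1, Nat.sub_lt hℓ Nat.one_pos⟩ (Fin.le_def.mpr (Nat.le_pred_of_lt j.isLt))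
  have hδle : δ ≤ s j ^ 2 := by
    rw [hδ]
    exact pow_le_pow_left₀ (hnn _) hle 2
  have hnn' : 0 ≤ s j ^ 2 - δ := sub_nonneg.mpr hδle
  have : (Real.sqrt (s j ^ 2 - δ) * y j) ^ 2 = (s j ^ 2 - δ) * y j ^ 2 := by
    rw [mul_pow, Real.sq_sqrt hnn']
  rw [this, mul_pow]
  have hy2 : 0 ≤ y j ^ 2 := sq_nonneg _
  nlinarith [sq_nonneg (y j)]
end

section
/- For the Frequent Directions shrinking step producing Q from C, the squared Frobenius norms satisfy ‖C‖_F² = ‖Q‖_F² + ℓδ. -/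
/-
The squared Frobenius norm is `tr (M Mᵀ)`, so it is unchanged by multiplying with a matrix with
orthonormal columns on the left or with the transpose of one on the right. Hence
`‖C‖_F² = ‖S‖_F² = ∑ s_j²` and `‖Q‖_F² = ‖S′‖_F² = ∑ (s_j² - δ)`, where every `s_j² - δ ≥ 0`
because `δ` is the smallest of the `s_j²`.
-/

open Matrix

section Frobenius

variable {m n p : ℕ}

lemma frobSq_eq_trace_mul_transpose (M : Matrix (Fin m) (Fin p) ℝ) :
    frobSq M = (M * Mᵀ).trace := by
  simp [frobSq, trace, mul_apply, sq]

lemma frobSq_eq_trace_transpose_mul (M : Matrix (Fin m) (Fin p) ℝ) :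
    frobSq M = (Mᵀ * M).trace := by
  rw [frobSq_eq_trace_mul_transpose, trace_mul_comm]

lemma frobSq_mul_of_transpose_mul_self_eq_one {Z : Matrix (Fin n) (Fin m) ℝ} (hZ : Zᵀ * Z = 1)
    (M : Matrix (Fin m) (Fin p) ℝ) : frobSq (Z * M) = frobSq M := by
  rw [frobSq_eq_trace_transpose_mul, frobSq_eq_trace_transpose_mul, transpose_mul,
    Matrix.mul_assoc, ← Matrix.mul_assoc Zᵀ, hZ, Matrix.one_mul]

lemma frobSq_mul_transpose_of_transpose_mul_self_eq_one {Y : Matrix (Fin n) (Fin p) ℝ}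
    (hY : Yᵀ * Y = 1) (M : Matrix (Fin m) (Fin p) ℝ) : frobSq (M * Yᵀ) = frobSq M := by
  rw [frobSq_eq_trace_mul_transpose, frobSq_eq_trace_mul_transpose, transpose_mul,
    transpose_transpose, Matrix.mul_assoc, ← Matrix.mul_assoc Yᵀ, hY, Matrix.one_mul]

lemma frobSq_diagonal (s : Fin n → ℝ) : frobSq (diagonal s) = ∑ i, s i ^ 2 := by
  simp [frobSq, diagonal_apply]

end Frobenius

/-- For the Frequent Directions shrinking step producing `Q` from `C`, the
squared Frobenius norms satisfy `‖C‖_F² = ‖Q‖_F² + ℓ δ`. -/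
theorem fd_shrink_frobenius
    (ℓ d : ℕ) (hℓ : 0 < ℓ)
    (C : Matrix (Fin ℓ) (Fin d) ℝ)
    (Z : Matrix (Fin ℓ) (Fin ℓ) ℝ) (Y : Matrix (Fin d) (Fin ℓ) ℝ)
    (s : Fin ℓ → ℝ) (δ : ℝ) (Q : Matrix (Fin ℓ) (Fin d) ℝ)
    -- a singular value decomposition `C = Z S Yᵀ`
    (hZ : Zᵀ * Z = 1) (hY : Yᵀ * Y = 1)
    (hSVD : C = Z * Matrix.diagonal s * Yᵀ)
    (hmono : ∀ j j' : Fin ℓ, j ≤ j' → s j' ≤ s j)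
    (hnn : ∀ j, 0 ≤ s j)
    -- `δ = s_ℓ²`, the square of the smallest singular value
    (hδ : δ = s ⟨ℓ - 1, Nat.sub_lt hℓ Nat.one_pos⟩ ^ 2)
    -- the shrinking step `Q = S' Yᵀ` with `S' = diag (√(s_j² - δ))`
    (hQ : Q = Matrix.diagonal (fun j => Real.sqrt (s j ^ 2 - δ)) * Yᵀ)
 :
    frobSq C = frobSq Q + (ℓ : ℝ) * δ := by
  have hδ_le (j : Fin ℓ) : δ ≤ s j ^ 2 :=
    hδ ▸ pow_le_pow_left₀ (hnn _) (hmono _ _ (Nat.le_sub_one_of_lt j.isLt)) 2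
  calc frobSq C = ∑ j, s j ^ 2 := by
        rw [hSVD, frobSq_mul_transpose_of_transpose_mul_self_eq_one hY,
          frobSq_mul_of_transpose_mul_self_eq_one hZ, frobSq_diagonal]
    _ = ∑ j, (s j ^ 2 - δ) + ℓ * δ := by simp
    _ = frobSq Q + ℓ * δ := by
        rw [hQ, frobSq_mul_transpose_of_transpose_mul_self_eq_one hY, frobSq_diagonal]
        simp only [Real.sq_sqrt (sub_nonneg.2 (hδ_le _))]
end

section
/- Let Q be the output of the Frequent Directions algorithm run on an n×d matrix A with parameter ℓ, and let Δ = ∑_{i=1}^n δ_i. Then for every unit vector x ∈ ℝ^d, 0 ≤ ‖Ax‖² − ‖Qx‖² ≤ Δ. -/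
open Matrix

lemma sqNorm_nonneg {m : ℕ} (v : Fin m → ℝ) : 0 ≤ sqNorm v :=
  Finset.sum_nonneg fun i _ => sq_nonneg _

lemma fd_tele {n : ℕ} (f : Fin (n + 1) → ℝ) :
    ∑ i : Fin n, (f i.succ - f i.castSucc) = f (Fin.last n) - f 0 := by
  induction n with
  | zero => simp
  | succ n ih =>
    rw [Fin.sum_univ_castSucc]
    have := ih (fun k => f k.castSucc)
    simp only [Fin.succ_castSucc] at this ⊢
    rw [this, Fin.succ_last, Fin.castSucc_zero]
    ring

/-- Let `Q = Qⁿ` be the output of the Frequent Directions algorithm run on an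
`n × d` matrix `A` with parameter `ℓ`, and let `Δ = ∑_{i=1}^n δ_i`.  Then for
every unit vector `x ∈ ℝ^d`, `0 ≤ ‖Ax‖² - ‖Qx‖² ≤ Δ`. -/
theorem fd_directional_additive_error
    (n d ℓ : ℕ) (hℓ : 0 < ℓ)
    (A : Matrix (Fin n) (Fin d) ℝ)
    (Q : Fin (n + 1) → Matrix (Fin ℓ) (Fin d) ℝ)
    (C : Fin n → Matrix (Fin ℓ) (Fin d) ℝ)
    (Z : Fin n → Matrix (Fin ℓ) (Fin ℓ) ℝ)
    (Y : Fin n → Matrix (Fin d) (Fin ℓ) ℝ)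
    (s : Fin n → Fin ℓ → ℝ) (δ : Fin n → ℝ)
    -- the algorithm starts with the zero matrix
    (hQ0 : Q 0 = 0)
    -- `C i` is `Q^{i-1}` with its last row replaced by the `i`-th row of `A`
    (hC : ∀ i : Fin n,
      C i = (Q i.castSucc).updateRow ⟨ℓ - 1, Nat.sub_lt hℓ Nat.one_pos⟩ (A i))
    -- a singular value decomposition `C i = Z S Yᵀ` of `C i`
    (hZ : ∀ i, (Z i)ᵀ * Z i = 1)
    (hY : ∀ i, (Y i)ᵀ * Y i = 1)
    (hSVD : ∀ i, C i = Z i * Matrix.diagonal (s i) * (Y i)ᵀ)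
    (hmono : ∀ i, ∀ j j' : Fin ℓ, j ≤ j' → s i j' ≤ s i j)
    (hnn : ∀ i j, 0 ≤ s i j)
    -- `δ i` is the square of the smallest singular value of `C i`
    (hδ : ∀ i, δ i = s i ⟨ℓ - 1, Nat.sub_lt hℓ Nat.one_pos⟩ ^ 2)
    -- the shrinking step producing `Q^i = S' Yᵀ`
    (hQs : ∀ i : Fin n,
      Q i.succ = Matrix.diagonal (fun j => Real.sqrt (s i j ^ 2 - δ i)) * (Y i)ᵀ)
    (x : Fin d → ℝ) (hx : sqNorm x = 1) :
    0 ≤ sqNorm (A.mulVec x) - sqNorm ((Q (Fin.last n)).mulVec x) ∧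
    sqNorm (A.mulVec x) - sqNorm ((Q (Fin.last n)).mulVec x) ≤ ∑ i, δ i := by
  set r : Fin ℓ := ⟨ℓ - 1, Nat.sub_lt hℓ Nat.one_pos⟩ with hr
  set u : Fin n → Fin ℓ → ℝ := fun i => (Y i)ᵀ.mulVec x with hu
  set f : Fin (n + 1) → ℝ := fun k => sqNorm ((Q k).mulVec x) with hf
  -- δ i ≤ s i j ^ 2
  have hsd : ∀ i j, δ i ≤ s i j ^ 2 := by
    intro i j
    rw [hδ i]
    have hjr : j ≤ r := by
      simp only [hr, Fin.le_def]
      omega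
    exact pow_le_pow_left₀ (hnn i r) (hmono i j r hjr) 2
  have hδnn : ∀ i, 0 ≤ δ i := fun i => (hδ i) ▸ sq_nonneg _
  -- last row of every Q k is zero
  have hlast : ∀ k : Fin (n + 1), Q k r = 0 := by
    intro k
    induction k using Fin.cases with
    | zero => rw [hQ0]; rfl
    | succ j =>
      rw [hQs j]
      funext c
      have : Real.sqrt (s j r ^ 2 - δ j) = 0 := by
        rw [hδ j, sub_self, Real.sqrt_zero]
      simp [Matrix.diagonal_mul, this]
  -- ‖C i x‖² = ‖Q^{i-1} x‖² + (a_i ⬝ x)²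
  have hCx : ∀ i : Fin n,
      sqNorm ((C i).mulVec x) = f i.castSucc + (A.mulVec x i) ^ 2 := by
    intro i
    have hupd : (C i).mulVec x =
        Function.update ((Q i.castSucc).mulVec x) r (A i ⬝ᵥ x) := by
      funext k
      rw [hC i]
      by_cases hk : k = r
      · subst hk; simp [Matrix.mulVec, Matrix.updateRow_apply]
      · simp [Matrix.mulVec, Matrix.updateRow_apply, hk, Function.update_of_ne hk]
    rw [hupd]
    have hsq : (fun k => Function.update ((Q i.castSucc).mulVec x) r (A i ⬝ᵥ x) k ^ 2)
        = Function.update (fun k => ((Q i.castSucc).mulVec x) k ^ 2) r ((A i ⬝ᵥ x) ^ 2) := by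
      funext k
      by_cases hk : k = r
      · subst hk; simp
      · simp [Function.update_of_ne hk]
    have hzero : ((Q i.castSucc).mulVec x) r = 0 := by
      simp [Matrix.mulVec, hlast i.castSucc]
    have hAx : A.mulVec x i = A i ⬝ᵥ x := rfl
    rw [sqNorm, hsq, Finset.sum_update_of_mem (Finset.mem_univ r)]
    simp only [hf]
    rw [show sqNorm ((Q i.castSucc).mulVec x)
        = ∑ k ∈ Finset.univ.erase r, ((Q i.castSucc).mulVec x) k ^ 2 + ((Q i.castSucc).mulVec x) r ^ 2 from
      (Finset.sum_erase_add _ _ (Finset.mem_univ r)).symm]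
    rw [hzero, hAx]
    rw [show (Finset.univ : Finset (Fin ℓ)) \ {r} = Finset.univ.erase r by
      ext; simp [Finset.mem_erase, and_comm]]
    ring
  -- ‖Z w‖² = ‖w‖²
  have hZnorm : ∀ i (w : Fin ℓ → ℝ), ((Z i).mulVec w) ⬝ᵥ ((Z i).mulVec w) = w ⬝ᵥ w := by
    intro i w
    rw [Matrix.dotProduct_mulVec]
    congr 1
    calc ((Z i).mulVec w) ᵥ* Z i = (w ᵥ* (Z i)ᵀ) ᵥ* Z i := by rw [Matrix.vecMul_transpose]
      _ = w ᵥ* ((Z i)ᵀ * Z i) := by rw [Matrix.vecMul_vecMul]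
      _ = w := by rw [hZ i, Matrix.vecMul_one]
  -- ‖C i x‖² in terms of singular values
  have hCx2 : ∀ i : Fin n, sqNorm ((C i).mulVec x) = ∑ j, s i j ^ 2 * u i j ^ 2 := by
    intro i
    rw [sqNorm_eq_dot, hSVD i]
    rw [show (Z i * Matrix.diagonal (s i) * (Y i)ᵀ).mulVec x
        = (Z i).mulVec ((Matrix.diagonal (s i)).mulVec (u i)) by
      rw [Matrix.mulVec_mulVec, Matrix.mulVec_mulVec]]
    rw [hZnorm i]
    simp [dotProduct, Matrix.mulVec_diagonal]
    congr 1; funext j; ring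
  -- ‖Q^i x‖² in terms of singular values
  have hQx : ∀ i : Fin n, f i.succ = ∑ j, (s i j ^ 2 - δ i) * u i j ^ 2 := by
    intro i
    rw [hf]
    simp only [hQs i]
    rw [sqNorm, show (Matrix.diagonal (fun j => Real.sqrt (s i j ^ 2 - δ i)) * (Y i)ᵀ).mulVec x
        = (Matrix.diagonal (fun j => Real.sqrt (s i j ^ 2 - δ i))).mulVec (u i) by
      rw [Matrix.mulVec_mulVec]]
    refine Finset.sum_congr rfl fun j _ => ?_
    rw [Matrix.mulVec_diagonal, mul_pow, Real.sq_sqrt (by linarith [hsd i j])]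
  -- ‖u i‖² ≤ 1
  have huble : ∀ i, sqNorm (u i) ≤ 1 := by
    intro i
    have hp : ((Y i).mulVec (u i)) ⬝ᵥ ((Y i).mulVec (u i)) = u i ⬝ᵥ u i := by
      rw [Matrix.dotProduct_mulVec]
      congr 1
      calc ((Y i).mulVec (u i)) ᵥ* Y i = (u i ᵥ* (Y i)ᵀ) ᵥ* Y i := by
            rw [Matrix.vecMul_transpose]
        _ = u i ᵥ* ((Y i)ᵀ * Y i) := by rw [Matrix.vecMul_vecMul]
        _ = u i := by rw [hY i, Matrix.vecMul_one]
    have hxp : x ⬝ᵥ ((Y i).mulVec (u i)) = u i ⬝ᵥ u i := by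
      rw [Matrix.dotProduct_mulVec]
      congr 1
      rw [← Matrix.mulVec_transpose]
    have hpx : ((Y i).mulVec (u i)) ⬝ᵥ x = u i ⬝ᵥ u i := by
      rw [dotProduct_comm, hxp]
    have hnonneg : 0 ≤ sqNorm (x - (Y i).mulVec (u i)) := sqNorm_nonneg _
    rw [sqNorm_eq_dot, sub_dotProduct, dotProduct_sub,
      dotProduct_sub, hp, hxp, hpx] at hnonneg
    have : sqNorm (u i) ≤ sqNorm x := by
      rw [sqNorm_eq_dot, sqNorm_eq_dot]; linarith
    rw [hx] at this; exact this
  -- key telescoping identity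
  have hstep : ∀ i : Fin n,
      f i.succ - f i.castSucc = (A.mulVec x i) ^ 2 - δ i * sqNorm (u i) := by
    intro i
    have h1 := hCx i
    have h2 := hCx2 i
    have h3 := hQx i
    have : f i.succ = sqNorm ((C i).mulVec x) - δ i * sqNorm (u i) := by
      rw [h3, h2, sqNorm, Finset.mul_sum, ← Finset.sum_sub_distrib]
      refine Finset.sum_congr rfl fun j _ => ?_
      ring
    rw [this, h1]; ring
  have hsum : f (Fin.last n) - f 0
      = sqNorm (A.mulVec x) - ∑ i, δ i * sqNorm (u i) := by
    rw [← fd_tele f]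
    rw [show sqNorm (A.mulVec x) = ∑ i, (A.mulVec x i) ^ 2 from rfl,
      ← Finset.sum_sub_distrib]
    exact Finset.sum_congr rfl fun i _ => hstep i
  have hf0 : f 0 = 0 := by
    simp [hf, hQ0, sqNorm]
  have hmain : sqNorm (A.mulVec x) - f (Fin.last n) = ∑ i, δ i * sqNorm (u i) := by
    rw [hf0] at hsum; linarith
  rw [show sqNorm ((Q (Fin.last n)).mulVec x) = f (Fin.last n) from rfl, hmain]
  constructor
  · exact Finset.sum_nonneg fun i _ => mul_nonneg (hδnn i) (sqNorm_nonneg _)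
  · refine Finset.sum_le_sum fun i _ => ?_
    calc δ i * sqNorm (u i) ≤ δ i * 1 := by
          exact mul_le_mul_of_nonneg_left (huble i) (hδnn i)
      _ = δ i := mul_one _
end
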